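/- Let A be a ring and I a two-sided ideal of A contained in the Jacobson radical of A. Let P be a bounded complex of finitely generated projective A-modules, and let P/IP denote the complex whose n-th term is P_n / (I·P_n) with the differentials induced by those of P. If the complex P/IP is exact, then P is exact. -/

import Mathlib

open CategoryTheory CategoryTheory.Limits

universe u

/-- The additive functor `Mod A ⥤ Mod A` sending `M` to `M/IM` for a (left) ideal `I`. -/
noncomputable def quotByIdealFunctor (A : Type u) [Ring A] (I : Ideal A) :
    ModuleCat.{u} A ⥤ ModuleCat.{u} A where
  obj M := ModuleCat.of A (M ⧸ (I • ⊤ : Submodule A M))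
  map {M N} f := ModuleCat.ofHom (Submodule.mapQ _ _ f.hom (by
    rw [← Submodule.map_le_iff_le_comap, Submodule.map_smul'']
    exact smul_mono_right I le_top))
  map_id M := by
    apply ModuleCat.hom_ext
    apply Submodule.linearMap_qext
    ext x
    rfl
  map_comp f g := by
    apply ModuleCat.hom_ext
    apply Submodule.linearMap_qext
    ext x
    rfl

noncomputable instance (A : Type u) [Ring A] (I : Ideal A) :
    (quotByIdealFunctor A I).Additive where
  map_add := by
    intros
    apply ModuleCat.hom_ext
    apply Submodule.linearMap_qext
    ext x
    rfl

/-! Descending induction from the top degree. If `P` is exact in degree `n + 1` and the cycles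
`Z^{n+1}` are projective, then `d : P^n → Z^{n+1}` is a split surjection, so `Z^n` is a finitely
generated direct summand of `P^n`. Exactness of `P/IP` in degree `n` says `Z^n ≤ B^n + I • P^n`;
intersecting with the summand `Z^n` gives `Z^n ≤ B^n + I • Z^n`, and Nakayama's lemma over the
Jacobson radical yields `Z^n = B^n`, with `Z^n` projective as a summand of `P^n`. -/

section Modules

variable {A : Type*} [Ring A] {M₀ M₁ M₂ : Type*}
  [AddCommGroup M₀] [Module A M₀] [AddCommGroup M₁] [Module A M₁] [AddCommGroup M₂] [Module A M₂]

theorem Submodule.le_of_le_sup_smul_of_le_ringJacobson {I : Ideal A} (hI : I ≤ Ring.jacobson A)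
    {N N' : Submodule A M₁} (hN : N.FG) (h : N ≤ N' ⊔ I • N) : N ≤ N' := by
  have hbot : N.map N'.mkQ = ⊥ := by
    refine (hN.map _).eq_bot_of_le_jacobson_smul ?_
    calc N.map N'.mkQ ≤ (N' ⊔ I • N).map N'.mkQ := Submodule.map_mono h
      _ = I • N.map N'.mkQ := by
        rw [Submodule.map_sup, Submodule.map_smul'', Submodule.mkQ_map_self, bot_sup_eq]
      _ ≤ Ring.jacobson A • N.map N'.mkQ := Submodule.smul_mono_left hI
  rwa [← LinearMap.le_ker_iff_map, Submodule.ker_mkQ] at hbot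

theorem Submodule.smul_top_inf_le_smul_of_retraction (I : Ideal A) {N : Submodule A M₁}
    (r : M₁ →ₗ[A] N) (hr : ∀ x : N, r x = x) : I • ⊤ ⊓ N ≤ I • N := by
  rintro x ⟨hxI, hxN⟩
  have hx : N.subtype (r x) = x := congrArg Subtype.val (hr ⟨x, hxN⟩)
  have : (I • ⊤ : Submodule A M₁).map (N.subtype ∘ₗ r) ≤ I • N := by
    rw [Submodule.map_smul'', Submodule.map_top]
    exact smul_mono_right I (LinearMap.range_comp_le_range _ _ |>.trans (by simp))
  exact hx ▸ this ⟨x, hxI, rfl⟩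

theorem LinearMap.exists_retraction_ker_of_range_eq (g : M₁ →ₗ[A] M₂) {K : Submodule A M₂}
    [Module.Projective A K] (hK : LinearMap.range g = K) :
    ∃ r : M₁ →ₗ[A] LinearMap.ker g, ∀ x : LinearMap.ker g, r x = x := by
  let g' : M₁ →ₗ[A] K := g.codRestrict K fun x ↦ hK ▸ LinearMap.mem_range_self g x
  obtain ⟨s, hs⟩ := g'.exists_rightInverse_of_surjective (by
    rw [LinearMap.range_codRestrict, hK, Submodule.comap_subtype_self])
  have hgs (x : M₁) : g (s (g' x)) = g x :=
    congrArg Subtype.val (LinearMap.congr_fun hs (g' x))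
  refine ⟨(LinearMap.id - s ∘ₗ g').codRestrict _ fun x ↦ by simp [hgs], fun x ↦ ?_⟩
  have : g' x = 0 := Subtype.ext (LinearMap.mem_ker.mp x.2)
  ext
  simp [this]

theorem Submodule.le_of_le_sup_smul_top_of_retraction [Module.Finite A M₁] {I : Ideal A}
    (hI : I ≤ Ring.jacobson A) {N N' : Submodule A M₁} (r : M₁ →ₗ[A] N) (hr : ∀ x : N, r x = x)
    (hN' : N' ≤ N) (h : N ≤ N' ⊔ I • ⊤) : N ≤ N' := by
  have : Module.Finite A N := .of_surjective r fun x ↦ ⟨x, hr x⟩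
  refine le_of_le_sup_smul_of_le_ringJacobson hI (Module.Finite.iff_fg.mp this) ?_
  calc N ≤ (N' ⊔ I • ⊤) ⊓ N := le_inf h le_rfl
    _ = N' ⊔ I • ⊤ ⊓ N := sup_inf_assoc_of_le _ hN'
    _ ≤ N' ⊔ I • N := sup_le_sup_left (smul_top_inf_le_smul_of_retraction I r hr) _

theorem Submodule.ker_le_range_sup_of_exact_mapQ {p₀ : Submodule A M₀} {p₁ : Submodule A M₁}
    {p₂ : Submodule A M₂} {f : M₀ →ₗ[A] M₁} {g : M₁ →ₗ[A] M₂} (hf : p₀ ≤ p₁.comap f)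
    (hg : p₁ ≤ p₂.comap g) (h : Function.Exact (p₀.mapQ p₁ f hf) (p₁.mapQ p₂ g hg)) :
    LinearMap.ker g ≤ LinearMap.range f ⊔ p₁ := by
  intro z hz
  obtain ⟨y, hy⟩ := (h (p₁.mkQ z)).mp (by simp [LinearMap.mem_ker.mp hz])
  obtain ⟨y, rfl⟩ := p₀.mkQ_surjective y
  have : f y - z ∈ p₁ := (Submodule.Quotient.eq p₁).mp hy
  refine Submodule.mem_sup.mpr ⟨f y, LinearMap.mem_range_self f y, z - f y, ?_, by abel⟩
  simpa using p₁.neg_mem this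

end Modules

theorem HomologicalComplex.exactAt_iff_function_exact {A : Type*} [Ring A] {ι : Type*}
    {c : ComplexShape ι} (K : HomologicalComplex (ModuleCat.{u} A) c) {i j k : ι}
    (hi : c.prev j = i) (hk : c.next j = k) :
    K.ExactAt j ↔ Function.Exact (K.d i j).hom (K.d j k).hom := by
  rw [K.exactAt_iff' i j k hi hk, ShortComplex.ShortExact.moduleCat_exact_iff_function_exact]
  rfl

namespace CochainComplex

variable {A : Type*} [Ring A] (P : CochainComplex (ModuleCat.{u} A) ℤ)

theorem exactAt_and_projective_ker_of_isZero {n : ℤ} (h : IsZero (P.X n)) :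
    P.ExactAt n ∧ Module.Projective A (LinearMap.ker (P.d n (n + 1)).hom) :=
  have := ModuleCat.subsingleton_of_isZero h
  ⟨ShortComplex.exact_of_isZero_X₂ _ h, inferInstance⟩

theorem exactAt_and_projective_ker_of_exactAt_succ {I : Ideal A} (hI : I ≤ Ring.jacobson A)
    (n : ℤ) [Module.Finite A (P.X n)] [Module.Projective A (P.X n)]
    (hquot : LinearMap.ker (P.d n (n + 1)).hom ≤ LinearMap.range (P.d (n - 1) n).hom ⊔ I • ⊤)
    (hexact : P.ExactAt (n + 1))
    (hproj : Module.Projective A (LinearMap.ker (P.d (n + 1) (n + 1 + 1)).hom)) :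
    P.ExactAt n ∧ Module.Projective A (LinearMap.ker (P.d n (n + 1)).hom) := by
  have hexact' : Function.Exact (P.d n (n + 1)).hom (P.d (n + 1) (n + 1 + 1)).hom :=
    (P.exactAt_iff_function_exact (by simp) (by simp)).mp hexact
  obtain ⟨r, hr⟩ := (P.d n (n + 1)).hom.exists_retraction_ker_of_range_eq
    (LinearMap.exact_iff.mp hexact').symm
  have hcomp : LinearMap.range (P.d (n - 1) n).hom ≤ LinearMap.ker (P.d n (n + 1)).hom :=
    LinearMap.range_le_ker_iff.mpr (by rw [← ModuleCat.hom_comp, P.d_comp_d]; rfl)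
  refine ⟨(P.exactAt_iff_function_exact (i := n - 1) (k := n + 1) (by simp) (by simp)).mpr
    (LinearMap.exact_iff.mpr ?_), .of_split (LinearMap.ker _).subtype r (LinearMap.ext hr)⟩
  exact le_antisymm (Submodule.le_of_le_sup_smul_top_of_retraction hI r hr hcomp hquot) hcomp

end CochainComplex

theorem exact_of_quotient_exact_general
    {A : Type u} [Ring A] (I : Ideal A)
    (hjac : I ≤ (⊥ : Ideal A).jacobson)
    (P : CochainComplex (ModuleCat.{u} A) ℤ)
    (hproj : ∀ n : ℤ, Projective (P.X n))
    (hfg : ∀ n : ℤ, Module.Finite A (P.X n))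
    (b : ℤ)
    (hbdd₂ : ∀ n : ℤ, b < n → IsZero (P.X n))
    (hquot : ∀ n : ℤ,
      (((quotByIdealFunctor A I).mapHomologicalComplex (ComplexShape.up ℤ)).obj P).ExactAt n) :
    ∀ n : ℤ, P.ExactAt n := by
  rw [Ideal.jacobson_bot] at hjac
  have hker (n : ℤ) :
      LinearMap.ker (P.d n (n + 1)).hom ≤ LinearMap.range (P.d (n - 1) n).hom ⊔ I • ⊤ :=
    Submodule.ker_le_range_sup_of_exact_mapQ (Submodule.smul_top_le_comap_smul_top I _)
      (Submodule.smul_top_le_comap_smul_top I _)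
      ((HomologicalComplex.exactAt_iff_function_exact _ (i := n - 1) (k := n + 1) (by simp)
        (by simp)).mp (hquot n))
  have key (n : ℤ) : P.ExactAt n ∧ Module.Projective A (LinearMap.ker (P.d n (n + 1)).hom) := by
    induction n using Int.inductionOn' (b := b + 1) with
    | zero => exact P.exactAt_and_projective_ker_of_isZero (hbdd₂ _ (by omega))
    | succ k hk _ => exact P.exactAt_and_projective_ker_of_isZero (hbdd₂ _ (by omega))
    | pred k _ ih =>
      have := hfg (k - 1)
      have := hproj (k - 1)
      rw [← sub_add_cancel k 1] at ih
      exact P.exactAt_and_projective_ker_of_exactAt_succ hjac (k - 1) (hker _) ih.1 ih.2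
  exact fun n ↦ (key n).1

/-- a Nakayama-type lemma for complexes. Let `I` be a two-sided ideal
contained in the Jacobson radical of `A`, and `P` a bounded complex of finitely generated
projective `A`-modules. If the degreewise quotient complex `P/IP` is exact, then `P`
is exact. -/
theorem exact_of_quotient_exact
    {A : Type u} [Ring A] (I : Ideal A)
    (htwosided : ∀ (a : A), ∀ x ∈ I, x * a ∈ I)
    (hjac : I ≤ (⊥ : Ideal A).jacobson)
    (P : CochainComplex (ModuleCat.{u} A) ℤ)
    (hproj : ∀ n : ℤ, Projective (P.X n))
    (hfg : ∀ n : ℤ, Module.Finite A (P.X n))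
    (a b : ℤ)
    (hbdd₁ : ∀ n : ℤ, n < a → IsZero (P.X n))
    (hbdd₂ : ∀ n : ℤ, b < n → IsZero (P.X n))
    (hquot : ∀ n : ℤ,
      (((quotByIdealFunctor A I).mapHomologicalComplex (ComplexShape.up ℤ)).obj P).ExactAt n) :
    ∀ n : ℤ, P.ExactAt n :=
  exact_of_quotient_exact_general I hjac P hproj hfg b hbdd₂ hquot
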